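/- arXiv:1307.4875 — 4 statements merged into one kernel-verified Lean document; each statement's English description precedes it below -/
import Mathlib

section
/- Let Γ be a finite subgroup of SO(4) that is isomorphic as an abstract group to SL(2, ZMod 5). Then the action of Γ on ℝ⁴ is free away from the origin: every nonidentity element of Γ fixes no nonzero vector of ℝ⁴; in particular Γ acts freely on the unit sphere S³. -/
noncomputable section

abbrev En (n : ℕ) : Type := EuclideanSpace ℝ (Fin n)

/-- The orthogonal group `O(n)`: linear isometric equivalences of `EuclideanSpace ℝ (Fin n)`. -/
abbrev OG (n : ℕ) : Type := En n ≃ₗᵢ[ℝ] En n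

instance OGact (n : ℕ) : MulAction (OG n) (En n) where
  smul g x := g x
  one_smul _ := rfl
  mul_smul _ _ _ := rfl

/-- `g` has determinant one (membership in `SO(n)` for orthogonal `g`). -/
def detOne {n : ℕ} (g : OG n) : Prop :=
  LinearMap.det (g.toLinearEquiv : En n →ₗ[ℝ] En n) = 1

/-- The fixed-point subspace of a single orthogonal transformation. -/
def fixedBy {n : ℕ} (g : OG n) : Submodule ℝ (En n) where
  carrier := {x | g x = x}
  add_mem' := by
    intro a b ha hb
    simp only [Set.mem_setOf_eq, map_add] at *
    rw [ha, hb]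
  zero_mem' := by simp only [Set.mem_setOf_eq, map_zero]
  smul_mem' := by
    intro c a ha
    simp only [Set.mem_setOf_eq, map_smul] at *
    rw [ha]

/-- A pseudoreflection: an orthogonal transformation whose fixed-point subspace
has dimension `n - 2`. -/
def IsPseudoreflection {n : ℕ} (g : OG n) : Prop :=
  Module.finrank ℝ (fixedBy g) = n - 2

/-- `Fix(H)`: the subspace fixed pointwise by a subgroup `H`. -/
def fixedSub {n : ℕ} (H : Subgroup (OG n)) : Submodule ℝ (En n) where
  carrier := {x | ∀ g ∈ H, g x = x}
  add_mem' := by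
    intro a b ha hb g hg
    simp only [map_add, ha g hg, hb g hg]
  zero_mem' := by intro g _; simp only [map_zero]
  smul_mem' := by
    intro c a ha g hg
    simp only [map_smul, ha g hg]

/-- `F_Γ(L)`: the maximal subgroup of `Γ` fixing `L` pointwise. -/
def Fsub {n : ℕ} (Γ : Subgroup (OG n)) (L : Submodule ℝ (En n)) : Subgroup (OG n) where
  carrier := {g | g ∈ Γ ∧ ∀ x ∈ L, g x = x}
  one_mem' := ⟨Γ.one_mem, fun _ _ => rfl⟩
  mul_mem' := by
    rintro a b ⟨haΓ, ha⟩ ⟨hbΓ, hb⟩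
    refine ⟨Γ.mul_mem haΓ hbΓ, fun x hx => ?_⟩
    show a (b x) = x
    rw [hb x hx, ha x hx]
  inv_mem' := by
    rintro a ⟨haΓ, ha⟩
    refine ⟨Γ.inv_mem haΓ, fun x hx => ?_⟩
    show a.symm x = x
    conv_lhs => rw [← ha x hx]
    exact a.symm_apply_apply x

/-- A minimal subgroup of the action of `Γ`: nontrivial, of the form
`Γ' = F_Γ(Fix(Γ'))`, and minimal with respect to inclusion among nontrivial
subgroups of this form. -/
def IsMinimalSubgroup {n : ℕ} (Γ Γ' : Subgroup (OG n)) : Prop :=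
  Γ' ≤ Γ ∧ Γ' ≠ ⊥ ∧ Γ' = Fsub Γ (fixedSub Γ') ∧
    ∀ Γ'' : Subgroup (OG n), Γ'' ≠ ⊥ → Γ'' = Fsub Γ (fixedSub Γ'') → Γ'' ≤ Γ' → Γ'' = Γ'

/-- `Γ_min`: the subgroup generated by all minimal subgroups of the action of `Γ`. -/
def minGen {n : ℕ} (Γ : Subgroup (OG n)) : Subgroup (OG n) :=
  ⨆ Γ' ∈ {Γ' : Subgroup (OG n) | IsMinimalSubgroup Γ Γ'}, Γ'

/-- Two subspaces are orthogonal. -/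
def OrthSubspaces {n : ℕ} (U W : Submodule ℝ (En n)) : Prop :=
  ∀ u ∈ U, ∀ w ∈ W, (inner ℝ u w : ℝ) = 0

abbrev SL2 (p : ℕ) := Matrix.SpecialLinearGroup (Fin 2) (ZMod p)

/-- `Γ = Γ_ps × P₁ × ⋯ × P_k` in standard form, with the factors acting in
pairwise orthogonal spaces: `Γ_ps` is generated by pseudoreflections, each `Pᵢ`
is isomorphic to `SL(2,5)` with `Fix(Pᵢ)ᗮ` four-dimensional and acting freely on
`Fix(Pᵢ)ᗮ \ {0}`, the subspaces `Fix(Γ_ps)ᗮ, Fix(P₁)ᗮ, …, Fix(P_k)ᗮ` are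
pairwise orthogonal, and `Γ` is the internal direct product of these subgroups. -/
def IsStandardForm {n : ℕ} (Γ : Subgroup (OG n)) (k : ℕ) : Prop :=
  ∃ (G0 : Subgroup (OG n)) (P : Fin k → Subgroup (OG n)),
    G0 ≤ Γ ∧ (∀ i, P i ≤ Γ) ∧
    (∃ S : Set (OG n), (∀ g ∈ S, IsPseudoreflection g) ∧ G0 = Subgroup.closure S) ∧
    (∀ i, Nonempty (P i ≃* SL2 5)) ∧
    (∀ i, Module.finrank ℝ ((fixedSub (P i))ᗮ : Submodule ℝ (En n)) = 4) ∧
    (∀ i, ∀ g ∈ P i, g ≠ 1 → ∀ x ∈ (fixedSub (P i))ᗮ, x ≠ 0 → g x ≠ x) ∧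
    (∀ i, OrthSubspaces ((fixedSub G0)ᗮ) ((fixedSub (P i))ᗮ)) ∧
    (∀ i j, i ≠ j → OrthSubspaces ((fixedSub (P i))ᗮ) ((fixedSub (P j))ᗮ)) ∧
    (∀ g ∈ G0, ∀ i, ∀ h ∈ P i, g * h = h * g) ∧
    (∀ i j, i ≠ j → ∀ g ∈ P i, ∀ h ∈ P j, g * h = h * g) ∧
    (∀ i, G0 ⊓ P i = ⊥) ∧
    (∀ i j, i ≠ j → P i ⊓ P j = ⊥) ∧
    Γ = G0 ⊔ (⨆ i, P i)

/-- The orbit space `ℝⁿ/Γ` with the quotient topology. -/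
abbrev SpaceQuot {n : ℕ} (Γ : Subgroup (OG n)) : Type :=
  Quotient (MulAction.orbitRel Γ (En n))

/-- The unit sphere `S^{n-1}` in `EuclideanSpace ℝ (Fin n)`. -/
abbrev Sph (n : ℕ) := Metric.sphere (0 : En n) 1

instance sphAct (n : ℕ) : MulAction (OG n) (Sph n) where
  smul g x := ⟨g (x : En n), by
    rw [mem_sphere_zero_iff_norm, g.norm_map]
    exact mem_sphere_zero_iff_norm.mp x.2⟩
  one_smul x := Subtype.ext rfl
  mul_smul g h x := Subtype.ext rfl

/-- The orbit space `S^{n-1}/Γ` with the quotient topology. -/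
abbrev SphereQuot {n : ℕ} (Γ : Subgroup (OG n)) : Type :=
  Quotient (MulAction.orbitRel Γ (Sph n))

/-!
Let `ρ : SL(2,5) → O(4)` be faithful. Since `SL(2,5)` is perfect, it acts with determinant one
on every invariant subspace, and trivially on every invariant plane (`SO(2)` is abelian). Applied
to the `(-1)`-eigenspace of the central involution `z = -1`, this forces that eigenspace to be the
whole space, i.e. `ρ z = -1`.

Every nontrivial `a ∈ SL(2,5)` either has a power equal to `z`, which fixes no nonzero vector, or
has order 3 or 5 and is inverted by some `T` with `T² = z`. In the latter case, if `ρ a` fixed a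
nonzero vector, the complex structure `ρ T` would preserve `Fix(ρ a)` and its orthogonal
complement, which are then both planes; on the complement `ρ a` and `ρ T` are rotations, so they
commute, and `ρ a` is an involution of odd order there, hence trivial.
-/

open Module

theorem MonoidHom.eq_one_of_commutator_eq_top {G H : Type*} [Group G] [Group H]
    (hG : commutator G = ⊤) (f : G →* H) (hf : ∀ a b, Commute (f a) (f b)) : f = 1 := by
  have hker : commutator G ≤ f.ker := Subgroup.commutator_le.mpr fun a _ b _ => by
    rw [MonoidHom.mem_ker, map_commutatorElement, commutatorElement_eq_one_iff_commute]
    exact hf a b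
  ext g
  exact hker (hG ▸ Subgroup.mem_top g)

section LinearAlgebra

variable {V : Type*} [AddCommGroup V] [Module ℝ V]

theorem eq_zero_of_eq_neg {v : V} (h : v = -v) : v = 0 := by
  have h2 : (2 : ℝ) • v = 0 := by rw [two_smul]; nth_rw 2 [h]; exact add_neg_cancel v
  exact (smul_eq_zero.mp h2).resolve_left two_ne_zero

theorem Module.End.eigenspace_neg_one_ne_bot {R M : Type*} [CommRing R] [AddCommGroup M]
    [Module R M] {f : Module.End R M} (hf : f * f = 1) (hf1 : f ≠ 1) :
    f.eigenspace (-1) ≠ ⊥ := by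
  obtain ⟨y, hy⟩ : ∃ y, f y ≠ y := by
    by_contra! h
    exact hf1 (LinearMap.ext h)
  have hffy : f (f y) = y := LinearMap.congr_fun hf y
  rw [Submodule.ne_bot_iff]
  refine ⟨f y - y, ?_, sub_ne_zero.mpr hy⟩
  rw [Module.End.mem_eigenspace_iff, map_sub, hffy, neg_one_smul, neg_sub]

theorem LinearMap.det_neg_one [FiniteDimensional ℝ V] :
    LinearMap.det (-1 : Module.End ℝ V) = (-1) ^ finrank ℝ V := by
  rw [← neg_one_smul ℝ (1 : Module.End ℝ V), LinearMap.det_smul, map_one, mul_one]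

theorem Module.End.even_finrank_of_mul_self_eq_neg_one [FiniteDimensional ℝ V]
    {J : Module.End ℝ V} (hJ : J * J = -1) : Even (finrank ℝ V) := by
  have hdet := congrArg LinearMap.det hJ
  rw [map_mul, LinearMap.det_neg_one] at hdet
  by_contra hodd
  rw [(Nat.not_even_iff_odd.mp hodd).neg_one_pow] at hdet
  nlinarith [mul_self_nonneg (LinearMap.det J)]

theorem Matrix.det_fin_two_eq_one_of_mul_self_eq_neg_one {A : Matrix (Fin 2) (Fin 2) ℝ}
    (hA : A * A = -1) : A.det = 1 := by
  have h : ∀ i j, (A * A) i j = (-1 : Matrix (Fin 2) (Fin 2) ℝ) i j := fun i j => by rw [hA]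
  have h00 := h 0 0
  have h01 := h 0 1
  simp [Matrix.mul_apply, Fin.sum_univ_two] at h00 h01
  rw [Matrix.det_fin_two]
  by_cases htr : A 0 0 + A 1 1 = 0
  · linear_combination A 0 0 * htr - h00
  · have hb : A 0 1 = 0 := (mul_eq_zero.mp (by linear_combination h01)).resolve_right htr
    rw [hb] at h00
    nlinarith [sq_nonneg (A 0 0)]

theorem LinearMap.det_eq_one_of_mul_self_eq_neg_one (hV : finrank ℝ V = 2)
    {J : Module.End ℝ V} (hJ : J * J = -1) : LinearMap.det J = 1 := by
  have : FiniteDimensional ℝ V := Module.finite_of_finrank_eq_succ hV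
  let b := Module.finBasisOfFinrankEq ℝ V hV
  rw [← LinearMap.det_toMatrix b]
  apply Matrix.det_fin_two_eq_one_of_mul_self_eq_neg_one
  rw [← LinearMap.toMatrix_mul, hJ, map_neg, LinearMap.toMatrix_one]

end LinearAlgebra

namespace LinearIsometryEquiv

variable {V : Type*} [NormedAddCommGroup V] [InnerProductSpace ℝ V]

def toEndHom : (V ≃ₗᵢ[ℝ] V) →* Module.End ℝ V where
  toFun f := f.toLinearEquiv
  map_one' := rfl
  map_mul' _ _ := rfl

theorem toEndHom_injective : Function.Injective (toEndHom : (V ≃ₗᵢ[ℝ] V) →* Module.End ℝ V) :=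
  fun _ _ h => LinearIsometryEquiv.ext (LinearMap.congr_fun h)

@[simp]
theorem toEndHom_apply (f : V ≃ₗᵢ[ℝ] V) (x : V) : toEndHom f x = f x := rfl

theorem commute_of_det_pos (hV : finrank ℝ V = 2) {f g : V ≃ₗᵢ[ℝ] V}
    (hf : 0 < LinearMap.det (toEndHom f)) (hg : 0 < LinearMap.det (toEndHom g)) :
    Commute f g := by
  have : Fact (finrank ℝ V = 2) := ⟨hV⟩
  have : FiniteDimensional ℝ V := Module.finite_of_finrank_eq_succ hV
  let o : Orientation ℝ V (Fin 2) := (Module.finBasisOfFinrankEq ℝ V hV).orientation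
  obtain ⟨θ, rfl⟩ := o.exists_linearIsometryEquiv_eq_of_det_pos hf
  obtain ⟨φ, rfl⟩ := o.exists_linearIsometryEquiv_eq_of_det_pos hg
  change (o.rotation φ).trans (o.rotation θ) = (o.rotation θ).trans (o.rotation φ)
  rw [o.rotation_trans, o.rotation_trans, add_comm]

theorem eq_one_of_mul_mul_eq_of_finrank_eq_two (hV : finrank ℝ V = 2) {g t : V ≃ₗᵢ[ℝ] V}
    {p : ℕ} (hp : Odd p) (hg : g ^ p = 1) (ht : ∀ y, t (t y) = -y) (hgt : g * t * g = t) :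
    g = 1 := by
  have hdet_t : LinearMap.det (toEndHom t) = 1 :=
    LinearMap.det_eq_one_of_mul_self_eq_neg_one hV (LinearMap.ext ht)
  have hdet_g : LinearMap.det (toEndHom g) = 1 := by
    have h := congrArg (fun f => LinearMap.det (toEndHom f)) hg
    simp only [map_pow, map_one] at h
    exact hp.pow_inj.mp (by rw [h, one_pow])
  have hcomm := commute_of_det_pos hV (hdet_g ▸ one_pos) (hdet_t ▸ one_pos)
  have hgg : g * g = 1 :=
    mul_right_cancel (b := t) (by rw [mul_assoc, hcomm.eq, ← mul_assoc, hgt, one_mul])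
  obtain ⟨k, rfl⟩ := hp
  rwa [pow_succ, pow_mul, sq, hgg, one_pow, one_mul] at hg

variable {G : Type*} [Group G]

theorem det_eq_one_of_commutator_eq_top (hG : commutator G = ⊤) (σ : G →* (V ≃ₗᵢ[ℝ] V))
    (g : G) : LinearMap.det (toEndHom (σ g)) = 1 := by
  have h := MonoidHom.eq_one_of_commutator_eq_top hG
    (LinearMap.det.comp (toEndHom.comp σ)).toHomUnits fun _ _ => Commute.all _ _
  simpa using congrArg (fun f : G →* ℝˣ => (f g : ℝ)) h

theorem even_finrank_of_commutator_eq_top [FiniteDimensional ℝ V] (hG : commutator G = ⊤)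
    (σ : G →* (V ≃ₗᵢ[ℝ] V)) {z : G} (hz : ∀ v, σ z v = -v) : Even (finrank ℝ V) := by
  have hdet := det_eq_one_of_commutator_eq_top hG σ z
  rwa [show toEndHom (σ z) = -1 from LinearMap.ext hz, LinearMap.det_neg_one,
    neg_one_pow_eq_one_iff_even (by norm_num)] at hdet

theorem _root_.MonoidHom.eq_one_of_commutator_eq_top_of_finrank_eq_two (hG : commutator G = ⊤)
    (hV : finrank ℝ V = 2) (σ : G →* (V ≃ₗᵢ[ℝ] V)) : σ = 1 :=
  MonoidHom.eq_one_of_commutator_eq_top hG σ fun a b => commute_of_det_pos hV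
    (by rw [det_eq_one_of_commutator_eq_top hG]; exact one_pos)
    (by rw [det_eq_one_of_commutator_eq_top hG]; exact one_pos)

end LinearIsometryEquiv

namespace Submodule

variable {E : Type*} [NormedAddCommGroup E] [InnerProductSpace ℝ E] [FiniteDimensional ℝ E]

def isometryStabilizer (W : Submodule ℝ E) : Subgroup (E ≃ₗᵢ[ℝ] E) where
  carrier := {f | ∀ x ∈ W, f x ∈ W}
  one_mem' _ hx := hx
  mul_mem' hf hg x hx := hf _ (hg x hx)
  inv_mem' {f} hf x hx := by
    have hsurj : Function.Surjective ((f.toLinearEquiv : E →ₗ[ℝ] E).restrict hf) :=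
      LinearMap.injective_iff_surjective.mp fun a b hab =>
        Subtype.ext (f.injective (congrArg Subtype.val hab))
    obtain ⟨y, hy⟩ := hsurj ⟨x, hx⟩
    have hxy : x = f y := (congrArg Subtype.val hy).symm
    rw [LinearIsometryEquiv.coe_inv, hxy, f.symm_apply_apply]
    exact y.2

theorem isometryStabilizer_le_orthogonal (W : Submodule ℝ E) :
    W.isometryStabilizer ≤ Wᗮ.isometryStabilizer := by
  intro f hf x hx u hu
  have hfu : f⁻¹ u ∈ W := W.isometryStabilizer.inv_mem hf u hu
  calc inner ℝ u (f x) = inner ℝ (f (f⁻¹ u)) (f x) := by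
        rw [LinearIsometryEquiv.coe_inv, f.apply_symm_apply]
    _ = 0 := by rw [f.inner_map_map]; exact hx _ hfu

def restrictIsometry (W : Submodule ℝ E) : W.isometryStabilizer →* (W ≃ₗᵢ[ℝ] W) where
  toFun f :=
    { toFun x := ⟨f.1 x, f.2 x x.2⟩
      invFun x := ⟨f.1.symm x, (f⁻¹).2 x x.2⟩
      map_add' x y := Subtype.ext (map_add f.1 (x : E) y)
      map_smul' c x := Subtype.ext (map_smul f.1 c (x : E))
      left_inv x := Subtype.ext (f.1.symm_apply_apply x)
      right_inv x := Subtype.ext (f.1.apply_symm_apply x)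
      norm_map' x := f.1.norm_map x }
  map_one' := rfl
  map_mul' _ _ := rfl

@[simp]
theorem coe_restrictIsometry_apply (W : Submodule ℝ E) (f : W.isometryStabilizer) (x : W) :
    (W.restrictIsometry f x : E) = f.1 x := rfl

end Submodule

section DimensionAtMostFour

variable {E : Type*} [NormedAddCommGroup E] [InnerProductSpace ℝ E] [FiniteDimensional ℝ E]

open LinearIsometryEquiv

theorem MonoidHom.apply_eq_neg_of_commutator_eq_top {G : Type*} [Group G]
    (hG : commutator G = ⊤) (hE : finrank ℝ E ≤ 4) (ρ : G →* (E ≃ₗᵢ[ℝ] E)) {z : G}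
    (hz : z ∈ Subgroup.center G) (hzz : z * z = 1) (hz1 : ρ z ≠ 1) (x : E) : ρ z x = -x := by
  set W := Module.End.eigenspace (toEndHom (ρ z)) (-1)
  have hmem : ∀ {y}, y ∈ W ↔ ρ z y = -y := by simp [W]
  have hstab : ∀ g, ρ g ∈ W.isometryStabilizer := fun g y hy => by
    have hcomm : ρ z (ρ g y) = ρ g (ρ z y) := by
      simpa using (DFunLike.congr_fun (congrArg ρ (Subgroup.mem_center_iff.mp hz g)) y).symm
    rw [hmem] at hy ⊢
    rw [hcomm, hy, _root_.map_neg]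
  let σ : G →* (W ≃ₗᵢ[ℝ] W) := W.restrictIsometry.comp (ρ.codRestrict _ hstab)
  have hσz : ∀ w : W, σ z w = -w := fun w => Subtype.ext (hmem.mp w.2)
  have hW0 : W ≠ ⊥ := Module.End.eigenspace_neg_one_ne_bot
    (by rw [← map_mul, ← map_mul, hzz, map_one, map_one]) fun h => hz1 (toEndHom_injective h)
  have hW2 : finrank ℝ W ≠ 2 := fun h2 => by
    obtain ⟨w, hwW, hw0⟩ := Submodule.exists_mem_ne_zero_of_ne_bot hW0
    have h := hσz ⟨w, hwW⟩
    rw [MonoidHom.eq_one_of_commutator_eq_top_of_finrank_eq_two hG h2 σ] at h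
    exact hw0 (eq_zero_of_eq_neg (congrArg Subtype.val (by simpa using h)))
  obtain ⟨k, hk⟩ := even_finrank_of_commutator_eq_top hG σ hσz
  have hpos : finrank ℝ W ≠ 0 := fun h => hW0 (Submodule.finrank_eq_zero.mp h)
  have hle := W.finrank_le
  have hWtop : W = ⊤ := Submodule.eq_top_of_finrank_eq (by omega)
  exact hmem.mp (hWtop ▸ Submodule.mem_top)

theorem LinearIsometryEquiv.eq_one_of_mul_mul_eq_of_apply_eq_self (hE : finrank ℝ E ≤ 4)
    {g t : E ≃ₗᵢ[ℝ] E} {p : ℕ} (hp : Odd p) (hg : g ^ p = 1) (ht : ∀ y, t (t y) = -y)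
    (hgt : g * t * g = t) {x : E} (hx : x ≠ 0) (hgx : g x = x) : g = 1 := by
  set V := Module.End.eigenspace (toEndHom g) 1
  have hmem : ∀ {y}, y ∈ V ↔ g y = y := by simp [V]
  have hgV : g ∈ V.isometryStabilizer := fun y hy => by rw [hmem] at hy ⊢; rw [hy, hy]
  have htV : t ∈ V.isometryStabilizer := fun y hy => by
    rw [hmem] at hy ⊢
    simpa [hy] using DFunLike.congr_fun hgt y
  have hgW := V.isometryStabilizer_le_orthogonal hgV
  have htW := V.isometryStabilizer_le_orthogonal htV
  have hevenV := Module.End.even_finrank_of_mul_self_eq_neg_one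
    (J := toEndHom (V.restrictIsometry ⟨t, htV⟩)) (LinearMap.ext fun y => Subtype.ext (ht y))
  have hevenW := Module.End.even_finrank_of_mul_self_eq_neg_one
    (J := toEndHom (Vᗮ.restrictIsometry ⟨t, htW⟩)) (LinearMap.ext fun y => Subtype.ext (ht y))
  have hV0 : finrank ℝ V ≠ 0 := fun h => hx (by
    simpa [Submodule.finrank_eq_zero.mp h] using (hmem.mpr hgx : x ∈ V))
  have hsum := V.finrank_add_finrank_orthogonal
  have hW : ∀ w ∈ Vᗮ, g w = w := by
    obtain h0 | h2 : finrank ℝ Vᗮ = 0 ∨ finrank ℝ Vᗮ = 2 := by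
      obtain ⟨k, hk⟩ := hevenV; obtain ⟨l, hl⟩ := hevenW; omega
    · intro w hw
      rw [Submodule.finrank_eq_zero.mp h0, Submodule.mem_bot] at hw
      rw [hw, map_zero]
    · have h1 := eq_one_of_mul_mul_eq_of_finrank_eq_two h2 hp
        (g := Vᗮ.restrictIsometry ⟨g, hgW⟩) (t := Vᗮ.restrictIsometry ⟨t, htW⟩)
        (by rw [← map_pow, show (⟨g, hgW⟩ : Vᗮ.isometryStabilizer) ^ p = 1 from Subtype.ext hg,
          map_one])
        (fun y => Subtype.ext (ht y))
        (by rw [← map_mul, ← map_mul]; congr 1; exact Subtype.ext hgt)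
      intro w hw
      simpa using congrArg (fun f => (f ⟨w, hw⟩ : E)) h1
  have hVtop : V = ⊤ := Submodule.orthogonal_eq_bot_iff.mp <| by
    rw [eq_bot_iff, ← V.inf_orthogonal_eq_bot]
    exact le_inf (fun w hw => hmem.mpr (hW w hw)) le_rfl
  exact LinearIsometryEquiv.ext fun y => hmem.mp (hVtop ▸ Submodule.mem_top)

end DimensionAtMostFour

namespace SL2_5

theorem commutator_eq_top : commutator (SL2 5) = ⊤ :=
  have : Fact (Nat.Prime 5) := ⟨Nat.prime_five⟩
  Matrix.SL2.commutator_eq_top (a := (2 : ZMod 5)) (by decide +revert) (by decide +revert)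

set_option maxRecDepth 100000 in
theorem pow_three_eq_one_or_pow_five_eq_one_or_exists_pow_eq_neg_one :
    ∀ A : SL2 5, A ^ 3 = 1 ∨ A ^ 5 = 1 ∨ ∃ k < 6, A ^ k = -1 := by
  decide

set_option maxRecDepth 100000 in
theorem exists_mul_self_eq_neg_one_and_mul_mul_eq :
    ∀ A : SL2 5, A ^ 3 = 1 ∨ A ^ 5 = 1 → ∃ T : SL2 5, T * T = -1 ∧ A * T * A = T := by
  decide

variable {E : Type*} [NormedAddCommGroup E] [InnerProductSpace ℝ E] [FiniteDimensional ℝ E]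

open LinearIsometryEquiv

theorem apply_ne_self (hE : finrank ℝ E ≤ 4) (ρ : SL2 5 →* (E ≃ₗᵢ[ℝ] E))
    (hρ : Function.Injective ρ) {a : SL2 5} (ha : a ≠ 1) {x : E} (hx : x ≠ 0) :
    ρ a x ≠ x := by
  intro hax
  have hneg : ∀ y, ρ (-1) y = -y := ρ.apply_eq_neg_of_commutator_eq_top commutator_eq_top hE
    (Subgroup.mem_center_iff.mpr fun g => by rw [mul_neg_one, neg_one_mul]) (by decide)
    (by rw [Ne, ← map_one ρ, hρ.eq_iff]; decide)
  have hodd : ∀ p, Odd p → a ^ p = 1 → (∃ T : SL2 5, T * T = -1 ∧ a * T * a = T) → False := by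
    rintro p hp hap ⟨T, hTT, haTa⟩
    refine ha (hρ ?_)
    rw [map_one]
    refine eq_one_of_mul_mul_eq_of_apply_eq_self hE hp (by rw [← map_pow, hap, map_one])
      (fun y => ?_) (by rw [← map_mul, ← map_mul, haTa]) hx hax
    rw [← hneg y, ← hTT, map_mul, coe_mul, Function.comp_apply]
  rcases pow_three_eq_one_or_pow_five_eq_one_or_exists_pow_eq_neg_one a with h | h | ⟨k, -, hk⟩
  · exact hodd 3 (by decide) h (exists_mul_self_eq_neg_one_and_mul_mul_eq a (.inl h))
  · exact hodd 5 (by decide) h (exists_mul_self_eq_neg_one_and_mul_mul_eq a (.inr h))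
  · have hfix : ρ (a ^ k) x = x := by
      rw [← toEndHom_apply, map_pow, map_pow, Module.End.pow_apply]
      exact Function.IsFixedPt.iterate hax k
    rw [hk, hneg, neg_eq_iff_eq_neg] at hfix
    exact hx (eq_zero_of_eq_neg hfix)

end SL2_5

theorem SL2_5_in_SO4_is_Poincare_general (Γ : Subgroup (OG 4))
    (hiso : Nonempty (Γ ≃* SL2 5)) :
    (∀ g ∈ Γ, g ≠ 1 → ∀ x : En 4, x ≠ 0 → g x ≠ x) ∧
      (∀ g ∈ Γ, g ≠ 1 → ∀ x : Sph 4, g • x ≠ x) := by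
  obtain ⟨φ⟩ := hiso
  have hfree : ∀ g ∈ Γ, g ≠ 1 → ∀ x : En 4, x ≠ 0 → g x ≠ x := by
    intro g hg hg1 x hx
    simpa using SL2_5.apply_ne_self finrank_euclideanSpace_fin.le
      (Γ.subtype.comp φ.symm.toMonoidHom) (Γ.subtype_injective.comp φ.symm.injective)
      (a := φ ⟨g, hg⟩) (by simpa using hg1) hx
  exact ⟨hfree, fun g hg hg1 x hgx =>
    hfree g hg hg1 x (ne_zero_of_mem_unit_sphere x) (congrArg Subtype.val hgx)⟩

/-- A finite subgroup of `SO(4)` isomorphic as an abstract group to `SL(2, 5)`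
acts freely on `ℝ⁴ \ {0}`; in particular it acts freely on the unit sphere
`S³`. -/
theorem SL2_5_in_SO4_is_Poincare (Γ : Subgroup (OG 4)) [Finite Γ]
    (hdet : ∀ g ∈ Γ, detOne g)
    (hiso : Nonempty (Γ ≃* SL2 5)) :
    (∀ g ∈ Γ, g ≠ 1 → ∀ x : En 4, x ≠ 0 → g x ≠ x) ∧
      (∀ g ∈ Γ, g ≠ 1 → ∀ x : Sph 4, g • x ≠ x) :=
  SL2_5_in_SO4_is_Poincare_general Γ hiso
end
end

section
/- Let Γ be a finite subgroup of the orthogonal group O(n) and let x be a unit vector in ℝⁿ. Let Γ_x be the stabilizer of x in Γ. Then the subgroup of Γ_x generated by all minimal subgroups of the Γ_x-action, (Γ_x)_min, is contained in the stabilizer of x in Γ_min, i.e. (Γ_x)_min ≤ Γ_min ⊓ Γ_x. -/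
noncomputable section

/-!
`Γ_x = F_Γ(ℝx)`, and a subgroup `H ≤ F_Γ(L)` fixes `L` pointwise, so `F_{F_Γ(L)}(Fix H) = F_Γ(Fix H)`.
Hence the minimal subgroups of the `F_Γ(L)`-action are minimal subgroups of the `Γ`-action, which
gives `(Γ_x)_min ≤ Γ_min`.
-/

theorem le_fixedSub_of_le_Fsub {n : ℕ} {Γ H : Subgroup (OG n)} {L : Submodule ℝ (En n)}
    (hH : H ≤ Fsub Γ L) : L ≤ fixedSub H :=
  fun _ hy _ hg => (hH hg).2 _ hy

theorem Fsub_Fsub_of_le {n : ℕ} (Γ : Subgroup (OG n)) {L M : Submodule ℝ (En n)}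
    (hLM : L ≤ M) : Fsub (Fsub Γ L) M = Fsub Γ M := by
  ext g
  exact ⟨fun ⟨⟨hg, _⟩, hM⟩ => ⟨hg, hM⟩, fun ⟨hg, hM⟩ => ⟨⟨hg, fun y hy => hM y (hLM hy)⟩, hM⟩⟩

theorem Fsub_span_singleton {n : ℕ} (Γ : Subgroup (OG n)) (x : En n) :
    Fsub Γ (ℝ ∙ x) = Γ ⊓ MulAction.stabilizer (OG n) x := by
  ext g
  refine ⟨fun ⟨hg, hfix⟩ => ⟨hg, hfix x (Submodule.mem_span_singleton_self x)⟩,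
    fun ⟨hg, hgx⟩ => ⟨hg, fun y hy => ?_⟩⟩
  obtain ⟨c, rfl⟩ := Submodule.mem_span_singleton.mp hy
  rw [map_smul]
  exact congrArg (c • ·) hgx

theorem IsMinimalSubgroup.of_Fsub {n : ℕ} {Γ Γ' : Subgroup (OG n)} {L : Submodule ℝ (En n)}
    (h : IsMinimalSubgroup (Fsub Γ L) Γ') : IsMinimalSubgroup Γ Γ' := by
  obtain ⟨hle, hne, hclosed, hmin⟩ := h
  have hFsub : ∀ H ≤ Fsub Γ L, Fsub (Fsub Γ L) (fixedSub H) = Fsub Γ (fixedSub H) :=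
    fun H hH => Fsub_Fsub_of_le Γ (le_fixedSub_of_le_Fsub hH)
  refine ⟨hle.trans fun _ hg => hg.1, hne, hclosed.trans (hFsub Γ' hle), ?_⟩
  intro Γ'' hne'' hclosed'' hle''
  exact hmin Γ'' hne'' (hclosed''.trans (hFsub Γ'' (hle''.trans hle)).symm) hle''

theorem minGen_Fsub_le {n : ℕ} (Γ : Subgroup (OG n)) (L : Submodule ℝ (En n)) :
    minGen (Fsub Γ L) ≤ minGen Γ :=
  iSup₂_le fun Γ' hΓ' => le_iSup₂_of_le Γ' (IsMinimalSubgroup.of_Fsub hΓ') le_rfl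

theorem minGen_le {n : ℕ} (Γ : Subgroup (OG n)) : minGen Γ ≤ Γ :=
  iSup₂_le fun _ hΓ' => hΓ'.1

theorem stabilizer_minGen_inclusion_general (n : ℕ) (Γ : Subgroup (OG n))
    (x : En n) :
    minGen (Γ ⊓ MulAction.stabilizer (OG n) x) ≤
      minGen Γ ⊓ (Γ ⊓ MulAction.stabilizer (OG n) x) := by
  rw [← Fsub_span_singleton]
  exact le_inf (minGen_Fsub_le Γ _) (minGen_le _)

/-- For a finite subgroup `Γ < O(n)` and a unit vector `x`, the subgroup of the
stabilizer `Γ_x` generated by the minimal subgroups of the `Γ_x`-action is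
contained in the stabilizer of `x` in `Γ_min`. -/
theorem stabilizer_minGen_inclusion (n : ℕ) (Γ : Subgroup (OG n)) [Finite Γ]
    (x : En n) (hx : ‖x‖ = 1) :
    minGen (Γ ⊓ MulAction.stabilizer (OG n) x) ≤
      minGen Γ ⊓ (Γ ⊓ MulAction.stabilizer (OG n) x) :=
  stabilizer_minGen_inclusion_general n Γ x
end
end

section
/- Let Γ be a finite subgroup of the orthogonal group O(n) and let Γ' be a nontrivial subgroup of Γ with Γ' = F_Γ(Fix(Γ')). Then the action of Γ' on the unit sphere of the orthogonal complement Fix(Γ')^⊥ is free (every nonidentity element of Γ' fixes no nonzero vector of Fix(Γ')^⊥) if and only if Γ' is a minimal subgroup of the Γ-action. -/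
noncomputable section

/-! The subgroups `F_Γ(L)` and the subspaces `Fix(Γ')` form a Galois connection; call `Γ'` closed
when `Γ' = F_Γ(Fix(Γ'))`, as every `F_Γ(L)` is. If `Γ'` acts freely on the sphere of
`Fix(Γ')ᗮ`, any nontrivial `g ∈ Γ'` has fixed space exactly `Fix(Γ')`, so every nontrivial
closed subgroup of `Γ'` has the same fixed space as `Γ'` and hence equals it. Conversely, if
`g ∈ Γ'` is nontrivial and fixes `x ∈ Fix(Γ')ᗮ`, then `F_Γ(Fix(Γ') ⊔ ℝx)` is a nontrivial closed
subgroup of `Γ'`; by minimality it is `Γ'`, so `x ∈ Fix(Γ') ∩ Fix(Γ')ᗮ = 0`. -/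

theorem Submodule.mem_of_apply_eq_self {𝕜 E : Type*} [RCLike 𝕜] [NormedAddCommGroup E]
    [InnerProductSpace 𝕜 E] {K : Submodule 𝕜 E} [K.HasOrthogonalProjection] {f : E →ₗ[𝕜] E}
    (hK : ∀ y ∈ K, f y = y) (hKorth : ∀ z ∈ Kᗮ, f z = z → z = 0) {x : E} (hx : f x = x) :
    x ∈ K := by
  obtain ⟨y, hy, z, hz, rfl⟩ := K.exists_add_mem_mem_orthogonal x
  have hfz : f z = z := by
    rw [map_add, hK y hy] at hx
    exact add_left_cancel hx
  rw [hKorth z hz hfz, add_zero]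
  exact hy

section GaloisConnection

variable {n : ℕ} (Γ : Subgroup (OG n))

theorem Fsub_antitone : Antitone (Fsub Γ) :=
  fun _ _ hLM _ ⟨hgΓ, hg⟩ => ⟨hgΓ, fun x hx => hg x (hLM hx)⟩

theorem fixedSub_antitone : Antitone (fixedSub (n := n)) :=
  fun _ _ hHK _ hx g hg => hx g (hHK hg)

theorem le_fixedSub_Fsub (L : Submodule ℝ (En n)) : L ≤ fixedSub (Fsub Γ L) :=
  fun _ hx _ hg => hg.2 _ hx

theorem Fsub_fixedSub_Fsub (L : Submodule ℝ (En n)) :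
    Fsub Γ (fixedSub (Fsub Γ L)) = Fsub Γ L :=
  le_antisymm (Fsub_antitone Γ (le_fixedSub_Fsub Γ L))
    fun g hg => ⟨hg.1, fun _ hx => hx g hg⟩

theorem Fsub_sup (L M : Submodule ℝ (En n)) : Fsub Γ (L ⊔ M) = Fsub Γ L ⊓ Fsub Γ M := by
  refine le_antisymm (le_inf (Fsub_antitone Γ le_sup_left) (Fsub_antitone Γ le_sup_right)) ?_
  rintro g ⟨⟨hgΓ, hgL⟩, -, hgM⟩
  refine ⟨hgΓ, fun x hx => ?_⟩
  obtain ⟨y, hy, z, hz, rfl⟩ := Submodule.mem_sup.mp hx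
  rw [map_add, hgL y hy, hgM z hz]

theorem mem_Fsub_span_singleton {g : OG n} {x : En n} :
    g ∈ Fsub Γ (ℝ ∙ x) ↔ g ∈ Γ ∧ g x = x := by
  refine and_congr_right fun _ => ⟨fun h => h x (Submodule.mem_span_singleton_self x), ?_⟩
  rintro hgx _ hy
  obtain ⟨c, rfl⟩ := Submodule.mem_span_singleton.mp hy
  rw [map_smul, hgx]

end GaloisConnection

section Minimal

variable {n : ℕ} {Γ Γ' : Subgroup (OG n)}

def IsFreeOnFixedSubOrthogonal (Γ' : Subgroup (OG n)) : Prop :=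
  ∀ g ∈ Γ', g ≠ 1 → ∀ x ∈ (fixedSub Γ')ᗮ, x ≠ 0 → g x ≠ x

theorem fixedSub_eq_of_isFreeOnFixedSubOrthogonal (hfree : IsFreeOnFixedSubOrthogonal Γ')
    {Γ'' : Subgroup (OG n)} (hle : Γ'' ≤ Γ') (hnt : Γ'' ≠ ⊥) :
    fixedSub Γ'' = fixedSub Γ' := by
  obtain ⟨g, hg, hg1⟩ := Γ''.bot_or_exists_ne_one.resolve_left hnt
  refine le_antisymm (fun x hx => ?_) (fixedSub_antitone hle)
  refine Submodule.mem_of_apply_eq_self (K := fixedSub Γ') (f := g.toLinearMap)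
    (fun y hy => hy g (hle hg)) (fun z hz hgz => ?_) (hx g hg)
  by_contra hz0
  exact hfree g (hle hg) hg1 z hz hz0 hgz

theorem isMinimalSubgroup_of_isFreeOnFixedSubOrthogonal (hle : Γ' ≤ Γ) (hnt : Γ' ≠ ⊥)
    (hF : Γ' = Fsub Γ (fixedSub Γ')) (hfree : IsFreeOnFixedSubOrthogonal Γ') :
    IsMinimalSubgroup Γ Γ' := by
  refine ⟨hle, hnt, hF, fun Γ'' hnt'' hF'' hle'' => ?_⟩
  rw [hF'', fixedSub_eq_of_isFreeOnFixedSubOrthogonal hfree hle'' hnt'', ← hF]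

theorem IsMinimalSubgroup.isFreeOnFixedSubOrthogonal (hmin : IsMinimalSubgroup Γ Γ') :
    IsFreeOnFixedSubOrthogonal Γ' := by
  obtain ⟨-, -, hF, hminimal⟩ := hmin
  intro g hg hg1 x hx hx0 hgx
  set L := fixedSub Γ' ⊔ (ℝ ∙ x)
  have hgL : g ∈ Fsub Γ L := by
    rw [Fsub_sup, ← hF]
    exact ⟨hg, (mem_Fsub_span_singleton Γ).mpr ⟨(hF.le hg).1, hgx⟩⟩
  have hLnt : Fsub Γ L ≠ ⊥ := fun h => hg1 (by rwa [h, Subgroup.mem_bot] at hgL)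
  have hLle : Fsub Γ L ≤ Γ' := hF ▸ Fsub_antitone Γ le_sup_left
  have hLeq : Fsub Γ L = Γ' := hminimal _ hLnt (Fsub_fixedSub_Fsub Γ L).symm hLle
  have hxfix : x ∈ fixedSub Γ' :=
    hLeq ▸ le_fixedSub_Fsub Γ L (Submodule.mem_sup_right (Submodule.mem_span_singleton_self x))
  exact hx0 (inner_self_eq_zero.mp (hx x hxfix))

end Minimal

theorem free_iff_minimal_general (n : ℕ) (Γ : Subgroup (OG n))
    (Γ' : Subgroup (OG n)) (hle : Γ' ≤ Γ) (hnt : Γ' ≠ ⊥)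
    (hF : Γ' = Fsub Γ (fixedSub Γ')) :
    (∀ g ∈ Γ', g ≠ 1 → ∀ x ∈ (fixedSub Γ')ᗮ, x ≠ 0 → g x ≠ x) ↔
      IsMinimalSubgroup Γ Γ' :=
  ⟨isMinimalSubgroup_of_isFreeOnFixedSubOrthogonal hle hnt hF,
    IsMinimalSubgroup.isFreeOnFixedSubOrthogonal⟩

/-- For a nontrivial subgroup `Γ' ≤ Γ` with `Γ' = F_Γ(Fix(Γ'))`, the action of
`Γ'` on the unit sphere of `Fix(Γ')ᗮ` is free if and only if `Γ'` is a minimal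
subgroup of the `Γ`-action. -/
theorem free_iff_minimal (n : ℕ) (Γ : Subgroup (OG n)) [Finite Γ]
    (Γ' : Subgroup (OG n)) (hle : Γ' ≤ Γ) (hnt : Γ' ≠ ⊥)
    (hF : Γ' = Fsub Γ (fixedSub Γ')) :
    (∀ g ∈ Γ', g ≠ 1 → ∀ x ∈ (fixedSub Γ')ᗮ, x ≠ 0 → g x ≠ x) ↔
      IsMinimalSubgroup Γ Γ' :=
  free_iff_minimal_general n Γ Γ' hle hnt hF
end
end

section
/- Let V be a real inner product space, let W be a subspace of V, and let v ∈ V with ‖v‖ = 1. Write v = w + u where w is the orthogonal projection of v onto W and u = v − w, and assume u ≠ 0 and w ≠ 0. Let φ be a linear isometric equivalence of V that fixes W pointwise. If the angle between u and φ(u) is at most π/3, then the angle between v and φ(v) is strictly less than the angle between v and w. -/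
noncomputable section

/-!
Put `a = ‖w‖`, `b = ‖u‖`, `α = ∠(u, φ u)`. Since `φ` preserves `Wᗮ`, `φ v = w + φ u` with
`φ u ⟂ w`, so `cos ∠(v, φ v) = (a² + b² cos α) / (a² + b²)` while `cos ∠(v, w) = a / √(a² + b²)`.
For `α ≤ π/3` the first is at least `(a² + b²/2) / (a² + b²)`, and
`(a² + b²/2)² - a² (a² + b²) = b⁴/4 > 0`.
-/

open InnerProductGeometry Real
open scoped RealInnerProductSpace

section

variable {V : Type*} [NormedAddCommGroup V] [InnerProductSpace ℝ V]

theorem LinearIsometry.map_mem_orthogonal_of_forall_mem_eq {W : Submodule ℝ V}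
    (φ : V →ₗᵢ[ℝ] V) (hφ : ∀ y ∈ W, φ y = y) {u : V} (hu : u ∈ Wᗮ) : φ u ∈ Wᗮ := by
  rw [Submodule.mem_orthogonal] at hu ⊢
  intro y hy
  rw [← hφ y hy, φ.inner_map_map]
  exact hu y hy

theorem norm_add_sq_of_inner_eq_zero {x y : V} (h : ⟪x, y⟫ = 0) :
    ‖x + y‖ ^ 2 = ‖x‖ ^ 2 + ‖y‖ ^ 2 := by
  rw [sq, sq, sq, norm_add_sq_eq_norm_sq_add_norm_sq_real h]

theorem angle_lt_angle_of_cos_lt_cos {x y z : V} (h : cos (angle x z) < cos (angle x y)) :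
    angle x y < angle x z :=
  (strictAntiOn_cos.lt_iff_gt ⟨angle_nonneg x z, angle_le_pi x z⟩
    ⟨angle_nonneg x y, angle_le_pi x y⟩).mp h

theorem cos_angle_add_add_of_inner_eq_zero {w u u' : V} (hu : ⟪w, u⟫ = 0)
    (hu' : ⟪w, u'⟫ = 0) (hnorm : ‖u'‖ = ‖u‖) :
    cos (angle (w + u) (w + u')) =
      (‖w‖ ^ 2 + ‖u‖ ^ 2 * cos (angle u u')) / (‖w‖ ^ 2 + ‖u‖ ^ 2) := by
  have hsq := norm_add_sq_of_inner_eq_zero hu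
  have hnorm_add : ‖w + u'‖ = ‖w + u‖ := by
    rw [← pow_left_inj₀ (norm_nonneg _) (norm_nonneg _) two_ne_zero,
      norm_add_sq_of_inner_eq_zero hu', hsq, hnorm]
  have hinner : ⟪w + u, w + u'⟫ = ‖w‖ ^ 2 + ‖u‖ ^ 2 * cos (angle u u') := by
    rw [inner_add_left, inner_add_right, inner_add_right, hu', real_inner_comm w u, hu,
      real_inner_self_eq_norm_sq, ← cos_angle_mul_norm_mul_norm, hnorm]
    ring
  rw [cos_angle, hinner, hnorm_add, ← sq, hsq]

theorem angle_add_add_lt_angle_of_angle_le_pi_div_three {w u u' : V} (hu : ⟪w, u⟫ = 0)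
    (hu' : ⟪w, u'⟫ = 0) (hnorm : ‖u'‖ = ‖u‖) (hu0 : u ≠ 0) (hangle : angle u u' ≤ π / 3) :
    angle (w + u) (w + u') < angle (w + u) w := by
  apply angle_lt_angle_of_cos_lt_cos
  rw [cos_angle_add_add_of_inner_eq_zero hu hu' hnorm, angle_comm,
    cos_angle_add_of_inner_eq_zero hu, ← norm_add_sq_of_inner_eq_zero hu]
  have hb : 0 < ‖u‖ := norm_pos_iff.mpr hu0
  have hs : 0 < ‖w + u‖ := by
    nlinarith [norm_add_sq_of_inner_eq_zero hu, norm_nonneg (w + u), sq_nonneg ‖w‖]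
  have hcos : 1 / 2 ≤ cos (angle u u') := by
    rw [← cos_pi_div_three]
    exact cos_le_cos_of_nonneg_of_le_pi (angle_nonneg u u') (by linarith [pi_pos]) hangle
  have key : ‖w‖ * ‖w + u‖ < ‖w‖ ^ 2 + ‖u‖ ^ 2 / 2 := by
    nlinarith [norm_add_sq_of_inner_eq_zero hu, norm_nonneg w, pow_pos hb 4,
      mul_nonneg (norm_nonneg w) hs.le]
  rw [div_lt_div_iff₀ hs (by positivity)]
  nlinarith [norm_add_sq_of_inner_eq_zero hu, mul_le_mul_of_nonneg_left hcos (sq_nonneg ‖u‖)]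

end

theorem angle_reduction_general (V : Type) [NormedAddCommGroup V] [InnerProductSpace ℝ V]
    (W : Submodule ℝ V) (v w u : V) (hw : w ∈ W) (hu : u ∈ Wᗮ)
    (hv : v = w + u) (hu0 : u ≠ 0)
    (φ : V ≃ₗᵢ[ℝ] V) (hφ : ∀ y ∈ W, φ y = y)
    (hangle : InnerProductGeometry.angle u (φ u) ≤ Real.pi / 3) :
    InnerProductGeometry.angle v (φ v) < InnerProductGeometry.angle v w := by
  have hφu : φ u ∈ Wᗮ := φ.toLinearIsometry.map_mem_orthogonal_of_forall_mem_eq hφ hu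
  rw [hv, map_add, hφ w hw]
  exact angle_add_add_lt_angle_of_angle_le_pi_div_three
    (Submodule.inner_right_of_mem_orthogonal hw hu)
    (Submodule.inner_right_of_mem_orthogonal hw hφu) (φ.norm_map u) hu0 hangle

/-- Spherical-triangle comparison lemma: let `v = w + u` with `w ∈ W`, `u ∈ Wᗮ`,
`‖v‖ = 1`, `u ≠ 0`, `w ≠ 0`, and let `φ` be a linear isometric equivalence
fixing `W` pointwise.  If `∠(u, φ u) ≤ π/3` then `∠(v, φ v) < ∠(v, w)`. -/
theorem angle_reduction (V : Type) [NormedAddCommGroup V] [InnerProductSpace ℝ V]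
    (W : Submodule ℝ V) (v w u : V) (hw : w ∈ W) (hu : u ∈ Wᗮ)
    (hv : v = w + u) (hvnorm : ‖v‖ = 1) (hu0 : u ≠ 0) (hw0 : w ≠ 0)
    (φ : V ≃ₗᵢ[ℝ] V) (hφ : ∀ y ∈ W, φ y = y)
    (hangle : InnerProductGeometry.angle u (φ u) ≤ Real.pi / 3) :
    InnerProductGeometry.angle v (φ v) < InnerProductGeometry.angle v w :=
  angle_reduction_general V W v w u hw hu hv hu0 φ hφ hangle
end
end
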